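/- arXiv:math/0009018 — 2 statements merged into one kernel-verified Lean document; each statement's English description precedes it below -/
import Mathlib

section
/- Suppose P is the uniform distribution on A (P_i = 1/k for all i) and ρ is a permutation distortion measure. Then for every D ∈ (0, D_max), the degeneracy condition holds at D; moreover it holds with Q* equal to the uniform distribution on A, i.e., the uniform distribution Q* satisfies R(P,Q*,D) = R(D), and there exists λ* < 0 with Λ'_{P,Q*}(λ*) = D, λ*·D − Λ_{P,Q*}(λ*) = (ln 2)·R(D), and Σ_j (1/k)·e^{λ*·ρ_ij} taking the same value for every i ∈ {1,…,k}. -/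
/-!
For any pmf `Q` and slope `λ ≤ 0`, the Donsker–Varadhan form of Gibbs' inequality gives
`λ D - Λ_{P,Q}(λ) ≤ (ln 2) · cost(W)` for every channel `W` of distortion at most `D`, with
equality for the tilted channel `W_ij ∝ Q_j e^{λ ρ_ij}`, whose distortion is `Λ'_{P,Q}(λ)`.
So `R(P, Q, Λ'(λ)) = (λ Λ'(λ) - Λ(λ)) / ln 2`, and a `Q` maximising `Λ_{P,Q}(λ)` attains `R(D)`.
For uniform `P` and a symmetric permutation measure every row and column of `(e^{λ ρ_ij})` has
the same sum, so Jensen's inequality for `log` shows that the uniform `Q` is such a maximiser.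
Finally `Λ'_{P,U}` is continuous, at least `D_max` at `λ = 0` and tends to `0` as `λ → -∞`, so
it takes the value `D` at some `λ < 0`.
-/

open Real Finset

/-- `Q` is a probability mass function on `Fin k`. -/
def IsPmf {k : ℕ} (Q : Fin k → ℝ) : Prop := (∀ j, 0 ≤ Q j) ∧ ∑ j, Q j = 1

/-- `Λ_{P,Q}(λ) = Σ_i P_i · ln (Σ_j Q_j e^{λ ρ_ij})`. -/
noncomputable def Lam {k : ℕ} (P : Fin k → ℝ) (ρ : Fin k → Fin k → ℝ)
    (Q : Fin k → ℝ) (l : ℝ) : ℝ :=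
  ∑ i, P i * Real.log (∑ j, Q j * Real.exp (l * ρ i j))

/-- The cost `Σ_{i,j} P_i W_ij log₂ (W_ij / Q_j)` of a transition matrix `W`, with the
conventions `0 · log 0 = 0` (automatic in Lean since `Real.log 0 = 0`) and value `⊤`
if `W i j > 0` for some `j` with `Q j = 0`. -/
noncomputable def wCost {k : ℕ} (P Q : Fin k → ℝ) (W : Fin k → Fin k → ℝ) : EReal :=
  if ∀ i j, 0 < W i j → 0 < Q j then
    (((∑ i, ∑ j, P i * W i j * Real.logb 2 (W i j / Q j)) : ℝ) : EReal)
  else ⊤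

/-- `R(P,Q,D)`: infimum over row-stochastic matrices `W` with
`Σ_{i,j} P_i W_ij ρ_ij ≤ D` of the relative-entropy cost. -/
noncomputable def RPQ {k : ℕ} (P : Fin k → ℝ) (ρ : Fin k → Fin k → ℝ)
    (Q : Fin k → ℝ) (D : ℝ) : EReal :=
  ⨅ W ∈ {W : Fin k → Fin k → ℝ | (∀ i j, 0 ≤ W i j) ∧ (∀ i, ∑ j, W i j = 1) ∧
      ∑ i, ∑ j, P i * W i j * ρ i j ≤ D}, wCost P Q W

/-- The rate-distortion function `R(D) = inf_Q R(P,Q,D)`. -/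
noncomputable def RofD {k : ℕ} (P : Fin k → ℝ) (ρ : Fin k → Fin k → ℝ) (D : ℝ) : EReal :=
  ⨅ Q ∈ {Q : Fin k → ℝ | IsPmf Q}, RPQ P ρ Q D

/-- `D_max = min_j Σ_i P_i ρ_ij`. -/
noncomputable def Dmax {k : ℕ} (P : Fin k → ℝ) (ρ : Fin k → Fin k → ℝ) : ℝ :=
  sInf (Set.range fun j => ∑ i, P i * ρ i j)

/-- `ρ` is a permutation distortion measure: all rows of `(ρ_ij)` are permutations
of one another. -/
def IsPermMeasure {k : ℕ} (ρ : Fin k → Fin k → ℝ) : Prop :=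
  ∀ i i' : Fin k, ∃ σ : Equiv.Perm (Fin k), ∀ j, ρ i' j = ρ i (σ j)

/-- The degeneracy condition at distortion level `D`: there are a pmf `Q*` achieving
`R(P,Q*,D) = R(D)` and `λ* < 0` with `Λ'_{P,Q*}(λ*) = D`,
`λ*·D − Λ_{P,Q*}(λ*) = (ln 2)·R(D)`, and `Σ_j Q*_j e^{λ* ρ_ij}` independent of `i`. -/
def DegenAt {k : ℕ} (P : Fin k → ℝ) (ρ : Fin k → Fin k → ℝ) (D : ℝ) : Prop :=
  ∃ Q : Fin k → ℝ, IsPmf Q ∧ RPQ P ρ Q D = RofD P ρ D ∧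
    ∃ l : ℝ, l < 0 ∧ HasDerivAt (Lam P ρ Q) D l ∧
      ((l * D - Lam P ρ Q l : ℝ) : EReal) = (Real.log 2 : EReal) * RofD P ρ D ∧
      ∃ c : ℝ, ∀ i, ∑ j, Q j * Real.exp (l * ρ i j) = c

open Filter Topology

section TiltedMean

variable {ι : Type*} [Fintype ι]

theorem sub_le_mul_log_div {w y : ℝ} (hw : 0 ≤ w) (hy : 0 ≤ y) (hwy : 0 < w → 0 < y) :
    w - y ≤ w * log (w / y) := by
  rcases hw.eq_or_lt with rfl | hw
  · simpa using hy
  have h := mul_le_mul_of_nonneg_left (one_sub_inv_le_log_of_pos (div_pos hw (hwy hw))) hw.le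
  rwa [inv_div, mul_sub, mul_one, mul_div_cancel₀ _ hw.ne'] at h

theorem sum_mul_exp_pos {q : ι → ℝ} (hq0 : ∀ j, 0 ≤ q j) (hq : ∃ j, 0 < q j) (a : ι → ℝ)
    (l : ℝ) : 0 < ∑ j, q j * exp (l * a j) :=
  let ⟨j, hj⟩ := hq
  sum_pos' (fun j _ => mul_nonneg (hq0 j) (exp_pos _).le) ⟨j, mem_univ j, mul_pos hj (exp_pos _)⟩

theorem mul_sum_sub_log_le_sum_mul_log_div {w q : ι → ℝ} (a : ι → ℝ) (l : ℝ)
    (hw : ∀ j, 0 ≤ w j) (hw1 : ∑ j, w j = 1) (hq : ∀ j, 0 ≤ q j)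
    (hwq : ∀ j, 0 < w j → 0 < q j) :
    l * ∑ j, w j * a j - log (∑ j, q j * exp (l * a j)) ≤ ∑ j, w j * log (w j / q j) := by
  obtain ⟨j₀, hj₀⟩ : ∃ j, 0 < w j := by
    by_contra! h
    linarith [sum_nonpos fun j (_ : j ∈ univ) => h j]
  set t := ∑ j, q j * exp (l * a j)
  have ht : 0 < t := sum_mul_exp_pos hq ⟨j₀, hwq j₀ hj₀⟩ a l
  have key : ∀ j, w j - q j * exp (l * a j) / t
      ≤ w j * log (w j / q j) + w j * log t - l * (w j * a j) := by
    intro j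
    have h := sub_le_mul_log_div (y := q j * exp (l * a j) / t) (hw j)
      (by have := hq j; positivity) fun h => div_pos (mul_pos (hwq j h) (exp_pos _)) ht
    rcases (hw j).eq_or_lt with h0 | hpos
    · simpa [← h0] using h
    have hqj := hwq j hpos
    rwa [show w j / (q j * exp (l * a j) / t) = w j / q j * t / exp (l * a j) by
        field_simp,
      log_div (by positivity) (exp_pos _).ne', log_mul (by positivity) ht.ne', log_exp,
      mul_sub, mul_add, ← mul_assoc, mul_comm (w j) l, mul_assoc] at h
  have hsum := sum_le_sum fun j (_ : j ∈ univ) => key j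
  rw [sum_sub_distrib, ← sum_div, div_self ht.ne', hw1, sum_sub_distrib, sum_add_distrib,
    ← mul_sum, ← sum_mul, hw1] at hsum
  linarith

variable {q : ι → ℝ}

noncomputable def tiltedMean (q a : ι → ℝ) (l : ℝ) : ℝ :=
  (∑ j, q j * a j * exp (l * a j)) / ∑ j, q j * exp (l * a j)

theorem hasDerivAt_log_sum_mul_exp (hq0 : ∀ j, 0 ≤ q j) (hq : ∃ j, 0 < q j) (a : ι → ℝ)
    (l : ℝ) : HasDerivAt (fun l => log (∑ j, q j * exp (l * a j))) (tiltedMean q a l) l := by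
  have h : HasDerivAt (fun l => ∑ j, q j * exp (l * a j)) (∑ j, q j * a j * exp (l * a j)) l := by
    refine HasDerivAt.fun_sum fun j _ => ?_
    exact ((((hasDerivAt_id l).mul_const (a j)).exp).const_mul (q j)).congr_deriv
      (by simp only [id_eq, one_mul]; ring)
  exact h.log (sum_mul_exp_pos hq0 hq a l).ne'

theorem continuous_tiltedMean (hq0 : ∀ j, 0 ≤ q j) (hq : ∃ j, 0 < q j) (a : ι → ℝ) :
    Continuous (tiltedMean q a) :=
  Continuous.div (by fun_prop) (by fun_prop) fun l => (sum_mul_exp_pos hq0 hq a l).ne'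

theorem tiltedMean_zero (hq1 : ∑ j, q j = 1) (a : ι → ℝ) :
    tiltedMean q a 0 = ∑ j, q j * a j := by
  simp [tiltedMean, hq1]

theorem tendsto_tiltedMean_atBot (hq0 : ∀ j, 0 ≤ q j) {a : ι → ℝ} (ha : ∀ j, 0 ≤ a j) {j₀ : ι}
    (hq₀ : 0 < q j₀) (ha₀ : a j₀ = 0) : Tendsto (tiltedMean q a) atBot (𝓝 0) := by
  have hnum : Tendsto (fun l => ∑ j, q j * a j * exp (l * a j)) atBot (𝓝 0) := by
    rw [← sum_const_zero (s := (univ : Finset ι))]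
    refine tendsto_finsetSum _ fun j _ => ?_
    rcases (ha j).eq_or_lt with h | h
    · simp [← h]
    simpa using (tendsto_exp_atBot.comp (tendsto_id.atBot_mul_const h)).const_mul (q j * a j)
  -- the denominator is at least `q j₀`, the weight of a point where `a` vanishes
  refine tendsto_of_tendsto_of_tendsto_of_le_of_le tendsto_const_nhds
    (by simpa using hnum.div_const (q j₀)) (fun l => ?_) fun l => ?_
  · exact div_nonneg (sum_nonneg fun j _ => by have := hq0 j; have := ha j; positivity)
      (sum_mul_exp_pos hq0 ⟨j₀, hq₀⟩ a l).le
  · refine div_le_div_of_nonneg_left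
      (sum_nonneg fun j _ => by have := hq0 j; have := ha j; positivity) hq₀ ?_
    simpa [ha₀] using single_le_sum (fun j _ => mul_nonneg (hq0 j) (exp_pos (l * a j)).le)
      (mem_univ j₀)

end TiltedMean

theorem IsPmf.exists_pos {k : ℕ} {Q : Fin k → ℝ} (hQ : IsPmf Q) : ∃ j, 0 < Q j := by
  by_contra! h
  linarith [sum_nonpos fun j (_ : j ∈ univ) => h j, hQ.2]

theorem isPmf_uniform {k : ℕ} [NeZero k] : IsPmf fun _ : Fin k => 1 / (k : ℝ) :=
  ⟨fun _ => by positivity, by simp⟩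

section Channels

variable {k : ℕ} {P Q : Fin k → ℝ} {ρ : Fin k → Fin k → ℝ} {l D : ℝ}

def distortion (P : Fin k → ℝ) (ρ W : Fin k → Fin k → ℝ) : ℝ :=
  ∑ i, ∑ j, P i * W i j * ρ i j

def testChannels (P : Fin k → ℝ) (ρ : Fin k → Fin k → ℝ) (D : ℝ) :
    Set (Fin k → Fin k → ℝ) :=
  {W | (∀ i j, 0 ≤ W i j) ∧ (∀ i, ∑ j, W i j = 1) ∧ distortion P ρ W ≤ D}

noncomputable def tiltedChannel (Q : Fin k → ℝ) (ρ : Fin k → Fin k → ℝ) (l : ℝ)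
    (i j : Fin k) : ℝ :=
  Q j * exp (l * ρ i j) / ∑ j', Q j' * exp (l * ρ i j')

theorem hasDerivAt_Lam (hQ : IsPmf Q) (l : ℝ) :
    HasDerivAt (Lam P ρ Q) (∑ i, P i * tiltedMean Q (ρ i) l) l :=
  HasDerivAt.fun_sum fun i _ =>
    (hasDerivAt_log_sum_mul_exp hQ.1 hQ.exists_pos (ρ i) l).const_mul (P i)

theorem distortion_tiltedChannel :
    distortion P ρ (tiltedChannel Q ρ l) = ∑ i, P i * tiltedMean Q (ρ i) l := by
  refine sum_congr rfl fun i _ => ?_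
  rw [tiltedMean, mul_div_assoc', mul_sum, sum_div]
  refine sum_congr rfl fun j _ => ?_
  rw [tiltedChannel]
  ring

theorem tiltedChannel_mem_testChannels (hQ : IsPmf Q) :
    tiltedChannel Q ρ l ∈ testChannels P ρ (distortion P ρ (tiltedChannel Q ρ l)) := by
  have ht i := sum_mul_exp_pos hQ.1 hQ.exists_pos (ρ i) l
  refine ⟨fun i j => div_nonneg (mul_nonneg (hQ.1 j) (exp_pos _).le) (ht i).le,
    fun i => ?_, le_rfl⟩
  simp only [tiltedChannel]
  rw [← sum_div, div_self (ht i).ne']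

theorem wCost_tiltedChannel (hQ : IsPmf Q) :
    wCost P Q (tiltedChannel Q ρ l) =
      (((l * distortion P ρ (tiltedChannel Q ρ l) - Lam P ρ Q l) / log 2 : ℝ) : EReal) := by
  set W := tiltedChannel Q ρ l
  have ht i := sum_mul_exp_pos hQ.1 hQ.exists_pos (ρ i) l
  have hsupp : ∀ i j, 0 < W i j → 0 < Q j := fun i j hW =>
    (hQ.1 j).lt_of_ne fun h => hW.ne' (by simp [W, tiltedChannel, ← h])
  have hterm : ∀ i j, P i * W i j * logb 2 (W i j / Q j)
      = (l * (P i * W i j * ρ i j) - P i * W i j * log (∑ j', Q j' * exp (l * ρ i j'))) /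
        log 2 := by
    intro i j
    rcases (hQ.1 j).eq_or_lt with h | h
    · simp [W, tiltedChannel, ← h]
    rw [logb, show W i j / Q j = exp (l * ρ i j) / ∑ j', Q j' * exp (l * ρ i j') by
        simp only [W, tiltedChannel]; field_simp,
      log_div (exp_pos _).ne' (ht i).ne', log_exp]
    ring
  rw [wCost, if_pos hsupp, EReal.coe_eq_coe_iff, distortion, Lam, mul_sum, ← sum_sub_distrib,
    sum_div]
  refine sum_congr rfl fun i _ => ?_
  rw [sum_congr rfl fun j _ => hterm i j, ← sum_div, sum_sub_distrib, ← mul_sum, ← sum_mul,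
    ← mul_sum, (tiltedChannel_mem_testChannels (P := P) hQ).2.1 i, mul_one]

theorem mul_sub_Lam_le_wCost (hP : ∀ i, 0 ≤ P i) (hQ : ∀ j, 0 ≤ Q j) (hl : l ≤ 0)
    {W : Fin k → Fin k → ℝ} (hW : W ∈ testChannels P ρ D) :
    (((l * D - Lam P ρ Q l) / log 2 : ℝ) : EReal) ≤ wCost P Q W := by
  obtain ⟨hW0, hW1, hWD⟩ := hW
  rw [wCost]
  split_ifs with hsupp
  swap
  · exact le_top
  rw [EReal.coe_le_coe_iff]
  have hrow i := mul_sum_sub_log_le_sum_mul_log_div (ρ i) l (hW0 i) (hW1 i) hQ (hsupp i)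
  have hsum : l * distortion P ρ W - Lam P ρ Q l
      ≤ ∑ i, ∑ j, P i * W i j * log (W i j / Q j) := by
    simp only [distortion, Lam, mul_sum, ← sum_sub_distrib]
    refine sum_le_sum fun i _ => ?_
    simpa only [mul_sum, mul_sub, mul_assoc, mul_left_comm l] using
      mul_le_mul_of_nonneg_left (hrow i) (hP i)
  simp only [logb, ← mul_div_assoc, ← sum_div]
  gcongr
  nlinarith [mul_le_mul_of_nonpos_left hWD hl]

theorem mul_sub_Lam_le_RPQ (hP : ∀ i, 0 ≤ P i) (hQ : ∀ j, 0 ≤ Q j) (hl : l ≤ 0) :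
    (((l * D - Lam P ρ Q l) / log 2 : ℝ) : EReal) ≤ RPQ P ρ Q D :=
  le_iInf₂ fun _ hW => mul_sub_Lam_le_wCost hP hQ hl hW

theorem RPQ_distortion_tiltedChannel (hP : ∀ i, 0 ≤ P i) (hQ : IsPmf Q) (hl : l ≤ 0) :
    RPQ P ρ Q (distortion P ρ (tiltedChannel Q ρ l)) =
      (((l * distortion P ρ (tiltedChannel Q ρ l) - Lam P ρ Q l) / log 2 : ℝ) : EReal) :=
  le_antisymm ((iInf₂_le _ (tiltedChannel_mem_testChannels hQ)).trans_eq (wCost_tiltedChannel hQ))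
    (mul_sub_Lam_le_RPQ hP hQ.1 hl)

end Channels

section Slope

variable {k : ℕ} {P Q : Fin k → ℝ} {ρ : Fin k → Fin k → ℝ} {l D : ℝ}

theorem Dmax_le_sum_mul_sum (hQ : IsPmf Q) :
    Dmax P ρ ≤ ∑ i, P i * ∑ j, Q j * ρ i j := by
  have hmin j : Dmax P ρ ≤ ∑ i, P i * ρ i j :=
    csInf_le (Set.finite_range _).bddBelow ⟨j, rfl⟩
  calc Dmax P ρ = ∑ j, Q j * Dmax P ρ := by rw [← sum_mul, hQ.2, one_mul]
    _ ≤ ∑ j, Q j * ∑ i, P i * ρ i j :=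
      sum_le_sum fun j _ => mul_le_mul_of_nonneg_left (hmin j) (hQ.1 j)
    _ = ∑ i, P i * ∑ j, Q j * ρ i j := by
      simp only [mul_sum]
      rw [sum_comm]
      exact sum_congr rfl fun i _ => sum_congr rfl fun j _ => by ring

theorem exists_neg_sum_tiltedMean_eq (hQ : IsPmf Q) (hQpos : ∀ j, 0 < Q j)
    (hρ : ∀ i j, 0 ≤ ρ i j) (hρdiag : ∀ i, ρ i i = 0) (hD0 : 0 < D) (hD : D < Dmax P ρ) :
    ∃ l < 0, ∑ i, P i * tiltedMean Q (ρ i) l = D := by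
  set f := fun l => ∑ i, P i * tiltedMean Q (ρ i) l
  have hf : Continuous f := continuous_finsetSum _ fun i _ =>
    (continuous_tiltedMean hQ.1 hQ.exists_pos (ρ i)).const_mul (P i)
  have hf0 : D < f 0 := by
    simpa only [f, tiltedMean_zero hQ.2] using hD.trans_le (Dmax_le_sum_mul_sum hQ)
  have hlim : Tendsto f atBot (𝓝 0) := by
    simpa using tendsto_finsetSum univ fun i _ =>
      (tendsto_tiltedMean_atBot hQ.1 (hρ i) (hQpos i) (hρdiag i)).const_mul (P i)
  obtain ⟨l₀, hfl₀, hl₀⟩ :=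
    ((hlim.eventually (gt_mem_nhds hD0)).and (eventually_lt_atBot 0)).exists
  obtain ⟨l, hl, hfl⟩ :=
    intermediate_value_Icc hl₀.le hf.continuousOn ⟨hfl₀.le, hf0.le⟩
  exact ⟨l, hl.2.lt_of_ne (by rintro rfl; exact hf0.ne' hfl), hfl⟩

theorem RofD_eq_RPQ_of_Lam_le (hP : ∀ i, 0 ≤ P i) (hl : l ≤ 0) (hQ : IsPmf Q)
    (hR : RPQ P ρ Q D = (((l * D - Lam P ρ Q l) / log 2 : ℝ) : EReal))
    (hmax : ∀ Q', IsPmf Q' → Lam P ρ Q' l ≤ Lam P ρ Q l) :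
    RofD P ρ D = RPQ P ρ Q D := by
  refine le_antisymm (iInf₂_le Q hQ) (le_iInf₂ fun Q' hQ' => ?_)
  refine hR.trans_le (le_trans ?_ (mul_sub_Lam_le_RPQ hP hQ'.1 hl))
  have := hmax Q' hQ'
  gcongr

end Slope

section Permutation

variable {k : ℕ} {ρ : Fin k → Fin k → ℝ}

theorem IsPermMeasure.sum_row_eq (hρ : IsPermMeasure ρ) (F : ℝ → ℝ) (i i' : Fin k) :
    ∑ j, F (ρ i j) = ∑ j, F (ρ i' j) := by
  obtain ⟨σ, hσ⟩ := hρ i i'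
  simp_rw [hσ]
  exact (Equiv.sum_comp σ _).symm

theorem IsPermMeasure.sum_col_eq (hρ : IsPermMeasure ρ) (hsym : ∀ i j, ρ i j = ρ j i)
    (F : ℝ → ℝ) (i j : Fin k) : ∑ i', F (ρ i' j) = ∑ j', F (ρ i j') := by
  simp_rw [hsym _ j]
  exact hρ.sum_row_eq F j i

theorem Lam_le_Lam_uniform [NeZero k] {P Q : Fin k → ℝ} (hunif : ∀ i, P i = 1 / (k : ℝ))
    (hρ : IsPermMeasure ρ) (hsym : ∀ i j, ρ i j = ρ j i) (hQ : IsPmf Q) (l : ℝ) :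
    Lam P ρ Q l ≤ Lam P ρ (fun _ => 1 / (k : ℝ)) l := by
  set c := ∑ j, 1 / (k : ℝ) * exp (l * ρ 0 j)
  have hrow i : ∑ j, 1 / (k : ℝ) * exp (l * ρ i j) = c :=
    hρ.sum_row_eq (fun x => 1 / (k : ℝ) * exp (l * x)) i 0
  have hcol : ∑ i, 1 / (k : ℝ) * ∑ j, Q j * exp (l * ρ i j) = c := by
    simp only [mul_sum]
    rw [sum_comm]
    calc ∑ j, ∑ i, 1 / (k : ℝ) * (Q j * exp (l * ρ i j))
        = ∑ j, Q j * ∑ i, 1 / (k : ℝ) * exp (l * ρ i j) := by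
          simp only [mul_sum]
          exact sum_congr rfl fun j _ => sum_congr rfl fun i _ => by ring
      _ = c := by
          simp only [hρ.sum_col_eq hsym (fun x => 1 / (k : ℝ) * exp (l * x)) 0, ← sum_mul, hQ.2,
            one_mul, c]
  have jensen := strictConcaveOn_log_Ioi.concaveOn.le_map_sum (t := univ)
    (w := fun _ => 1 / (k : ℝ)) (p := fun i => ∑ j, Q j * exp (l * ρ i j))
    (fun _ _ => by positivity) isPmf_uniform.2
    fun i _ => sum_mul_exp_pos hQ.1 hQ.exists_pos (ρ i) l
  simp only [smul_eq_mul, hcol] at jensen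
  simpa only [Lam, hunif, hrow, ← sum_mul, isPmf_uniform.2, one_mul] using jensen

end Permutation

theorem stmt_0_general {k : ℕ} (hk : 2 ≤ k)
    (P : Fin k → ℝ) (ρ : Fin k → Fin k → ℝ)
    (hP : IsPmf P)
    (hρnn : ∀ i j, 0 ≤ ρ i j) (hρsym : ∀ i j, ρ i j = ρ j i)
    (hρzero : ∀ i j, ρ i j = 0 ↔ i = j)
    (hunif : ∀ i, P i = 1 / (k : ℝ))
    (hperm : IsPermMeasure ρ) :
    ∀ D : ℝ, 0 < D → D < Dmax P ρ →
      DegenAt P ρ D ∧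
      RPQ P ρ (fun _ => 1 / (k : ℝ)) D = RofD P ρ D ∧
      ∃ l : ℝ, l < 0 ∧ HasDerivAt (Lam P ρ (fun _ => 1 / (k : ℝ))) D l ∧
        ((l * D - Lam P ρ (fun _ => 1 / (k : ℝ)) l : ℝ) : EReal)
          = (Real.log 2 : EReal) * RofD P ρ D ∧
        ∃ c : ℝ, ∀ i, ∑ j, (1 / (k : ℝ)) * Real.exp (l * ρ i j) = c := by
  intro D hD0 hD
  have : NeZero k := ⟨by omega⟩
  obtain ⟨l, hl, hlD⟩ := exists_neg_sum_tiltedMean_eq isPmf_uniform (fun _ => by positivity) hρnn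
    (fun i => (hρzero i i).2 rfl) hD0 hD
  have hRU : RPQ P ρ (fun _ => 1 / (k : ℝ)) D
      = (((l * D - Lam P ρ (fun _ => 1 / (k : ℝ)) l) / log 2 : ℝ) : EReal) :=
    (distortion_tiltedChannel.trans hlD) ▸ RPQ_distortion_tiltedChannel hP.1 isPmf_uniform hl.le
  have hR := RofD_eq_RPQ_of_Lam_le hP.1 hl.le isPmf_uniform hRU
    fun Q hQ => Lam_le_Lam_uniform hunif hperm hρsym hQ l
  have hderiv : HasDerivAt (Lam P ρ fun _ => 1 / (k : ℝ)) D l :=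
    hlD ▸ hasDerivAt_Lam isPmf_uniform l
  have hvalue : ((l * D - Lam P ρ (fun _ => 1 / (k : ℝ)) l : ℝ) : EReal)
      = (log 2 : EReal) * RofD P ρ D := by
    rw [hR, hRU, ← EReal.coe_mul, mul_div_cancel₀ _ (log_pos one_lt_two).ne']
  have hconst : ∃ c : ℝ, ∀ i, ∑ j, 1 / (k : ℝ) * exp (l * ρ i j) = c :=
    ⟨_, fun i => hperm.sum_row_eq (fun x => 1 / (k : ℝ) * exp (l * x)) i 0⟩
  exact ⟨⟨_, isPmf_uniform, hR.symm, l, hl, hderiv, hvalue, hconst⟩, hR.symm, l, hl, hderiv,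
    hvalue, hconst⟩

/-- **Theorem 1(a).** If `P` is uniform on `A` and `ρ` is a permutation distortion
measure, then for every `D ∈ (0, D_max)` the degeneracy condition holds at `D`,
witnessed by the uniform `Q*`. -/
theorem stmt_0 {k : ℕ} (hk : 2 ≤ k)
    (P : Fin k → ℝ) (ρ : Fin k → Fin k → ℝ)
    (hP : IsPmf P) (hPpos : ∀ i, 0 < P i)
    (hρnn : ∀ i j, 0 ≤ ρ i j) (hρsym : ∀ i j, ρ i j = ρ j i)
    (hρzero : ∀ i j, ρ i j = 0 ↔ i = j)
    (hDmax : 0 < Dmax P ρ)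
    (hunif : ∀ i, P i = 1 / (k : ℝ))
    (hperm : IsPermMeasure ρ) :
    ∀ D : ℝ, 0 < D → D < Dmax P ρ →
      DegenAt P ρ D ∧
      RPQ P ρ (fun _ => 1 / (k : ℝ)) D = RofD P ρ D ∧
      ∃ l : ℝ, l < 0 ∧ HasDerivAt (Lam P ρ (fun _ => 1 / (k : ℝ))) D l ∧
        ((l * D - Lam P ρ (fun _ => 1 / (k : ℝ)) l : ℝ) : EReal)
          = (Real.log 2 : EReal) * RofD P ρ D ∧
        ∃ c : ℝ, ∀ i, ∑ j, (1 / (k : ℝ)) * Real.exp (l * ρ i j) = c :=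
  stmt_0_general hk P ρ hP hρnn hρsym hρzero hunif hperm
end

section
/- For every λ < 0, the four functions x ↦ e^{λ r_j(x)}, j = 0, 1, 2, 3, are linearly independent on I = [0, 6]: if c_0, c_1, c_2, c_3 are reals with c_0 e^{λ r_0(x)} + c_1 e^{λ r_1(x)} + c_2 e^{λ r_2(x)} + c_3 e^{λ r_3(x)} = 0 for all x ∈ [0, 6], then c_0 = c_1 = c_2 = c_3 = 0. -/
open Finset

/-- **Example 4 (L¹ distance).** For the adjusted `L¹` distortion measure
`ρ(x,y) = |x−y| − min{|x−1|, |x−3|, |x−5|}` on `I = [0,6]` with reproduction points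
`{1,3,5}` (so `r_j(x) = ρ(x,a_j)` for `j = 1,2,3` and `r_0 ≡ 0`) and any `λ < 0`,
the functions `x ↦ e^{λ r_j(x)}`, `j = 0,1,2,3`, are linearly independent on
`[0,6]`. -/
theorem stmt_19 (l : ℝ) (hl : l < 0) (r : Fin 4 → ℝ → ℝ)
    (hr0 : ∀ x : ℝ, r 0 x = 0)
    (hr1 : ∀ x : ℝ, r 1 x = |x - 1| - min (|x - 1|) (min (|x - 3|) (|x - 5|)))
    (hr2 : ∀ x : ℝ, r 2 x = |x - 3| - min (|x - 1|) (min (|x - 3|) (|x - 5|)))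
    (hr3 : ∀ x : ℝ, r 3 x = |x - 5| - min (|x - 1|) (min (|x - 3|) (|x - 5|)))
    (c : Fin 4 → ℝ)
    (hc : ∀ x ∈ Set.Icc (0 : ℝ) 6, ∑ j, c j * Real.exp (l * r j x) = 0) :
    ∀ j, c j = 0 := by
  have h1 := hc 1 (by norm_num)
  have h2 := hc 2 (by norm_num)
  have h3 := hc 3 (by norm_num)
  have h4 := hc 4 (by norm_num)
  rw [Fin.sum_univ_four, hr0, hr1, hr2, hr3] at h1 h2 h3 h4
  norm_num at h1 h2 h3 h4
  set t := Real.exp (l * 2) with ht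
  have ht1 : t < 1 := Real.exp_lt_one_iff.mpr (by nlinarith)
  have ht0 : 0 < t := Real.exp_pos _
  have e4 : Real.exp (l * 4) = t * t := by
    rw [ht, ← Real.exp_add, show l * 2 + l * 2 = l * 4 by ring]
  rw [e4] at h1
  have hc3 : c 3 = 0 := by
    have : c 3 * (t - 1) = 0 := by linear_combination h3 - h4
    rcases mul_eq_zero.mp this with h | h
    · exact h
    · linarith
  have hc1 : c 1 = 0 := by
    have : c 1 * (1 - t) = 0 := by linear_combination h2 - h3
    rcases mul_eq_zero.mp this with h | h
    · exact h
    · linarith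
  have hc2 : c 2 = 0 := by
    have : c 2 * (t - 1) = 0 := by linear_combination h1 - h2 - hc3 * (t * t - t)
    rcases mul_eq_zero.mp this with h | h
    · exact h
    · linarith
  have hc0 : c 0 = 0 := by
    have := h4
    rw [hc1, hc2, hc3] at this
    simpa using this
  intro j
  fin_cases j <;> assumption
end
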